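/- Let μ and ν be Borel probability measures on ℝ that are exact dimensional with dimensions s and t respectively. Then the product measure μ × ν on ℝ² is exact dimensional with dimension s + t, i.e., for (μ×ν)-a.e. (x,y), lim_{η↓0} log (μ×ν)(B((x,y),η)) / log η = s + t. -/

import Mathlib

/-!
In the sup metric a ball in `ℝ × ℝ` is the product of the coordinate balls, so
`log (μ × ν)(B((x,y),η)) = log μ(B(x,η)) + log ν(B(y,η))` as soon as both factors are positive,
which holds for a.e. point since almost every point lies in the support. Dividing by `log η`
adds the two local dimensions.
-/

open MeasureTheory Filter Topology

/-- `θ` is exact dimensional with dimension `s`: for `θ`-a.e. `x`,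
`log θ(B(x,η)) / log η → s` as `η ↓ 0`. -/
def IsExactDim (θ : Measure ℝ) (s : ℝ) : Prop :=
  ∀ᵐ x ∂θ, Tendsto
    (fun η : ℝ => Real.log (θ (Metric.closedBall x η)).toReal / Real.log η)
    (𝓝[>] (0 : ℝ)) (𝓝 s)

section Balls

variable {X : Type*} [PseudoMetricSpace X] [MeasurableSpace X]

lemma ae_measure_closedBall_pos [HereditarilyLindelofSpace X] (θ : Measure X) :
    ∀ᵐ x ∂θ, ∀ η : ℝ, 0 < η → 0 < θ (Metric.closedBall x η) := by
  filter_upwards [Measure.support_mem_ae] with x hx η hη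
  exact (Measure.mem_support_iff_forall x).1 hx _ (Metric.closedBall_mem_nhds x hη)

lemma ae_eventually_measure_closedBall_toReal_ne_zero [HereditarilyLindelofSpace X]
    (θ : Measure X) [IsFiniteMeasure θ] :
    ∀ᵐ x ∂θ, ∀ᶠ η in 𝓝[>] (0 : ℝ), (θ (Metric.closedBall x η)).toReal ≠ 0 := by
  filter_upwards [ae_measure_closedBall_pos θ] with x hx
  filter_upwards [self_mem_nhdsWithin] with η hη
  exact (ENNReal.toReal_pos (hx η hη).ne' (measure_ne_top θ _)).ne'

lemma Measure.prod_closedBall {Y : Type*} [PseudoMetricSpace Y] [MeasurableSpace Y]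
    (μ : Measure X) (ν : Measure Y) [SFinite ν] (x : X) (y : Y) (η : ℝ) :
    μ.prod ν (Metric.closedBall (x, y) η) =
      μ (Metric.closedBall x η) * ν (Metric.closedBall y η) := by
  rw [← closedBall_prod_same, Measure.prod_prod]

end Balls

lemma tendsto_log_mul_div_log {f g : ℝ → ℝ} {l : Filter ℝ} {s t : ℝ}
    (hf : Tendsto (fun η => Real.log (f η) / Real.log η) l (𝓝 s))
    (hg : Tendsto (fun η => Real.log (g η) / Real.log η) l (𝓝 t))
    (hf0 : ∀ᶠ η in l, f η ≠ 0) (hg0 : ∀ᶠ η in l, g η ≠ 0) :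
    Tendsto (fun η => Real.log (f η * g η) / Real.log η) l (𝓝 (s + t)) := by
  refine (hf.add hg).congr' ?_
  filter_upwards [hf0, hg0] with η hfη hgη
  rw [Real.log_mul hfη hgη, add_div]

/-- If `μ` and `ν` are exact dimensional with dimensions `s` and `t`, then `μ × ν` on
`ℝ² = ℝ × ℝ` (with the sup metric) is exact dimensional with dimension `s + t`. -/
theorem isExactDim_prod (μ ν : Measure ℝ) [IsProbabilityMeasure μ] [IsProbabilityMeasure ν]
    (s t : ℝ) (hμ : IsExactDim μ s) (hν : IsExactDim ν t) :
    ∀ᵐ p ∂(μ.prod ν), Tendsto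
      (fun η : ℝ => Real.log ((μ.prod ν) (Metric.closedBall p η)).toReal / Real.log η)
      (𝓝[>] (0 : ℝ)) (𝓝 (s + t)) := by
  filter_upwards
    [Measure.quasiMeasurePreserving_fst.ae
      (hμ.and (ae_eventually_measure_closedBall_toReal_ne_zero μ)),
    Measure.quasiMeasurePreserving_snd.ae
      (hν.and (ae_eventually_measure_closedBall_toReal_ne_zero ν))]
    with ⟨x, y⟩ ⟨hx, hμx⟩ ⟨hy, hνy⟩
  simp_rw [Measure.prod_closedBall, ENNReal.toReal_mul]
  exact tendsto_log_mul_div_log hx hy hμx hνy
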